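/- A disjoint union (forest) of tree-topology networks is synchronisable if and only if each of its component tree networks is synchronisable: τ(S_mb(N₁ ⊎ N₂)) = τ(S_sync(N₁ ⊎ N₂)) iff τ(S_mb(N₁)) = τ(S_sync(N₁)) and τ(S_mb(N₂)) = τ(S_sync(N₂)), where traces of the union are shuffles (arbitrary interleavings) of traces of the components. -/

import Mathlib

/-- A message with sender, receiver and payload. -/
structure Msg (P A : Type) where
  sender : P
  receiver : P
  payload : A
deriving DecidableEq

/-- Actions: send `!m` or receive `?m`. -/
inductive Act (P A : Type) where
  | send : Msg P A → Act P A
  | recv : Msg P A → Act P A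
deriving DecidableEq

namespace Act
variable {P A : Type}
def msg : Act P A → Msg P A | send m => m | recv m => m
def isSend : Act P A → Bool | send _ => true | recv _ => false
/-- The active participant of an action. -/
def active : Act P A → P | send m => m.sender | recv m => m.receiver
end Act

section Defs
variable {P A : Type}

/-- Projection onto send actions `w↓_!`. -/
def projOut (w : List (Act P A)) : List (Act P A) := w.filter Act.isSend
/-- Projection onto receive actions `w↓_?`. -/
def projIn (w : List (Act P A)) : List (Act P A) := w.filter (fun a => !a.isSend)
/-- Erase the `!`/`?` marks: `w↓_msg`. -/
def projMsg (w : List (Act P A)) : List (Msg P A) := w.map Act.msg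
/-- Projection onto actions in which `p` is active: `w↓_p`. -/
def projPeer [DecidableEq P] (p : P) (w : List (Act P A)) : List (Act P A) :=
  w.filter (fun a => decide (a.active = p))
/-- Projection onto actions involving only participants in `{p, q}`. -/
def projPQ [DecidableEq P] (p q : P) (w : List (Act P A)) : List (Act P A) :=
  w.filter (fun a =>
    (decide (a.msg.sender = p) || decide (a.msg.sender = q)) &&
    (decide (a.msg.receiver = p) || decide (a.msg.receiver = q)))

/-- A network of communicating automata. -/
structure Network (P A : Type) where
  State : P → Type
  init : ∀ p, State p
  trans : ∀ p, State p → Act P A → State p → Prop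
  final : ∀ p, Set (State p)
  Msgs : Set (Msg P A)

/-- Well-formedness: each automaton only performs actions in which it is active,
on messages of the network. -/
def Network.WF (N : Network P A) : Prop :=
  ∀ p s a s', N.trans p s a s' → a.msg ∈ N.Msgs ∧ a.active = p

/-- The set of participants sending to `p`. -/
def senders (N : Network P A) (p : P) : Set P :=
  {q | ∃ m ∈ N.Msgs, m.sender = q ∧ m.receiver = p}

/-- Directed edge of the topology. -/
def Network.Edge (N : Network P A) (p q : P) : Prop :=
  ∃ m ∈ N.Msgs, m.sender = p ∧ m.receiver = q

/-- The underlying undirected topology graph. -/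
def topoGraph (N : Network P A) : SimpleGraph P := SimpleGraph.fromRel N.Edge

/-- Tree topology: connected, acyclic, and every participant has at most one sender. -/
def TreeTopo (N : Network P A) : Prop :=
  (topoGraph N).IsTree ∧ ∀ p, (senders N p).Subsingleton

/-- Generic multi-step relation labelled by words of actions. -/
inductive Steps {C : Type _} (step : C → Act P A → C → Prop) : C → List (Act P A) → C → Prop where
  | nil (c : C) : Steps step c [] c
  | cons {c c' c'' : C} {a : Act P A} {w : List (Act P A)} :
      step c a c' → Steps step c' w c'' → Steps step c (a :: w) c''

variable [DecidableEq P]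

/-! ### Mailbox semantics -/

structure MbConfig (N : Network P A) where
  st : ∀ p, N.State p
  buf : P → List (Msg P A)

inductive MbStep (N : Network P A) : MbConfig N → Act P A → MbConfig N → Prop where
  | send (c : MbConfig N) (m : Msg P A) (s' : N.State m.sender) :
      N.trans m.sender (c.st m.sender) (.send m) s' →
      MbStep N c (.send m)
        ⟨Function.update c.st m.sender s',
         Function.update c.buf m.receiver (c.buf m.receiver ++ [m])⟩
  | recv (c : MbConfig N) (m : Msg P A) (s' : N.State m.receiver) (rest : List (Msg P A)) :
      N.trans m.receiver (c.st m.receiver) (.recv m) s' →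
      c.buf m.receiver = m :: rest →
      MbStep N c (.recv m)
        ⟨Function.update c.st m.receiver s',
         Function.update c.buf m.receiver rest⟩

def MbInit (N : Network P A) : MbConfig N := ⟨N.init, fun _ => []⟩
def MbFinal (N : Network P A) (c : MbConfig N) : Prop := ∀ p, c.st p ∈ N.final p
def MbReachable (N : Network P A) (c : MbConfig N) : Prop :=
  ∃ w, Steps (MbStep N) (MbInit N) w c
def MbExecs (N : Network P A) : Set (List (Act P A)) :=
  {w | ∃ c, Steps (MbStep N) (MbInit N) w c ∧ MbFinal N c}
def MbTraces (N : Network P A) : Set (List (Act P A)) := projOut '' MbExecs N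

/-! ### Peer-to-peer semantics -/

structure P2pConfig (N : Network P A) where
  st : ∀ p, N.State p
  buf : P → P → List (Msg P A)

inductive P2pStep (N : Network P A) : P2pConfig N → Act P A → P2pConfig N → Prop where
  | send (c : P2pConfig N) (m : Msg P A) (s' : N.State m.sender) :
      N.trans m.sender (c.st m.sender) (.send m) s' →
      P2pStep N c (.send m)
        ⟨Function.update c.st m.sender s',
         Function.update c.buf m.sender
           (Function.update (c.buf m.sender) m.receiver (c.buf m.sender m.receiver ++ [m]))⟩
  | recv (c : P2pConfig N) (m : Msg P A) (s' : N.State m.receiver) (rest : List (Msg P A)) :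
      N.trans m.receiver (c.st m.receiver) (.recv m) s' →
      c.buf m.sender m.receiver = m :: rest →
      P2pStep N c (.recv m)
        ⟨Function.update c.st m.receiver s',
         Function.update c.buf m.sender (Function.update (c.buf m.sender) m.receiver rest)⟩

def P2pInit (N : Network P A) : P2pConfig N := ⟨N.init, fun _ _ => []⟩
def P2pExecs (N : Network P A) : Set (List (Act P A)) :=
  {w | ∃ c, Steps (P2pStep N) (P2pInit N) w c ∧ ∀ p, c.st p ∈ N.final p}
def P2pTraces (N : Network P A) : Set (List (Act P A)) := projOut '' P2pExecs N

/-! ### Synchronous semantics -/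

inductive SyncStep (N : Network P A) : (∀ p, N.State p) → Act P A → (∀ p, N.State p) → Prop where
  | comm (st : ∀ p, N.State p) (m : Msg P A) (s1 : N.State m.sender) (s2 : N.State m.receiver) :
      N.trans m.sender (st m.sender) (.send m) s1 →
      N.trans m.receiver (st m.receiver) (.recv m) s2 →
      SyncStep N st (.send m)
        (Function.update (Function.update st m.sender s1) m.receiver s2)

def SyncExecs (N : Network P A) : Set (List (Act P A)) :=
  {w | ∃ st, Steps (SyncStep N) N.init w st ∧ ∀ p, st p ∈ N.final p}
def SyncTraces (N : Network P A) : Set (List (Act P A)) := projOut '' SyncExecs N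

/-! ### Local and influenced languages -/

inductive LocalPath (N : Network P A) (p : P) : N.State p → List (Act P A) → N.State p → Prop where
  | nil (s : N.State p) : LocalPath N p s [] s
  | cons {s s' s'' : N.State p} {a : Act P A} {w : List (Act P A)} :
      N.trans p s a s' → LocalPath N p s' w s'' → LocalPath N p s (a :: w) s''

/-- The language `L(A_p)` of the automaton of participant `p`. -/
def LocalLang (N : Network P A) (p : P) : Set (List (Act P A)) :=
  {w | ∃ s, LocalPath N p (N.init p) w s ∧ s ∈ N.final p}

/-- `L` is the family of influenced languages `L_T(A_p)` of a tree-topology network. -/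
def IsInfluenced (N : Network P A) (L : P → Set (List (Act P A))) : Prop :=
  (∀ p, senders N p = ∅ → L p = LocalLang N p) ∧
  (∀ p q, senders N p = {q} →
    L p = {w ∈ LocalLang N p | ∃ v ∈ L q, projMsg (projIn w) = projMsg (projOut v)})

/-! ### Shuffles -/

/-- One swap replacing an adjacent `!x ?y` by `?y !x`. -/
inductive SwapStep : List (Act P A) → List (Act P A) → Prop where
  | swap (u v : List (Act P A)) (x y : Msg P A) :
      SwapStep (u ++ Act.send x :: Act.recv y :: v) (u ++ Act.recv y :: Act.send x :: v)

/-- `w' ⋈_? w`: `w'` is a valid input shuffle of `w`. -/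
def ValidShuffle (w' w : List (Act P A)) : Prop := Relation.ReflTransGen SwapStep w w'

/-- The shuffled language `L_⋈(p)` of a language. -/
def ShuffleLang (Lp : Set (List (Act P A))) : Set (List (Act P A)) :=
  {w' | ∃ w ∈ Lp, ValidShuffle w' w}

/-- Insert after each send action its matching receive action. -/
def withRecvs (w : List (Act P A)) : List (Act P A) :=
  w.flatMap fun a => match a with
    | .send m => [.send m, .recv m]
    | .recv m => [.recv m]

end Defs

def Msg.map {P Q A : Type} (f : P → Q) (m : Msg P A) : Msg Q A :=
  ⟨f m.sender, f m.receiver, m.payload⟩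

def Act.map {P Q A : Type} (f : P → Q) : Act P A → Act Q A
  | .send m => .send (m.map f)
  | .recv m => .recv (m.map f)

/-- Disjoint union (side-by-side composition) of two networks. -/
def Network.sum {P₁ P₂ A : Type} (N₁ : Network P₁ A) (N₂ : Network P₂ A) :
    Network (P₁ ⊕ P₂) A where
  State := fun p => match p with | .inl p => N₁.State p | .inr p => N₂.State p
  init := fun p => match p with | .inl p => N₁.init p | .inr p => N₂.init p
  trans := fun p => match p with
    | .inl p => fun s a s' => ∃ a₁ : Act P₁ A, a = a₁.map Sum.inl ∧ N₁.trans p s a₁ s'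
    | .inr p => fun s a s' => ∃ a₂ : Act P₂ A, a = a₂.map Sum.inr ∧ N₂.trans p s a₂ s'
  final := fun p => match p with | .inl p => N₁.final p | .inr p => N₂.final p
  Msgs := {m | (∃ m₁ ∈ N₁.Msgs, m = m₁.map Sum.inl) ∨ (∃ m₂ ∈ N₂.Msgs, m = m₂.map Sum.inr)}

/-!
Every configuration of `N₁.sum N₂` reachable from the initial one is a pair of configurations of
the components (each mailbox of a participant of `Nᵢ` only ever holds messages of `Nᵢ`), and each
step of the union, mailbox or synchronous, is a step of exactly one component. Hence the
executions of the union are exactly the interleavings of executions of `N₁` and `N₂`, and since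
the send projection commutes with interleaving, the same holds for traces. Since the components
have disjoint alphabets and all states are final, each trace set contains `[]`, and the set of
interleavings of `T₁` and `T₂` determines `T₁` and `T₂` (intersect with the words of one
component), which gives the equivalence.
-/

open Function

section ListInterleave

variable {α β₁ β₂ : Type*}

inductive Interleave : List α → List α → List α → Prop
  | nil : Interleave [] [] []
  | left {a : α} {l₁ l₂ l : List α} : Interleave l₁ l₂ l → Interleave (a :: l₁) l₂ (a :: l)
  | right {a : α} {l₁ l₂ l : List α} : Interleave l₁ l₂ l → Interleave l₁ (a :: l₂) (a :: l)

namespace Interleave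

theorem nil_right : ∀ {l : List α}, Interleave l [] l
  | [] => nil
  | _ :: _ => left nil_right

theorem symm {l₁ l₂ l : List α} (h : Interleave l₁ l₂ l) : Interleave l₂ l₁ l := by
  induction h with
  | nil => exact nil
  | left _ ih => exact right ih
  | right _ ih => exact left ih

theorem eq_of_nil_right {l₁ l : List α} (h : Interleave l₁ [] l) : l₁ = l := by
  generalize hl₂ : ([] : List α) = l₂ at h
  induction h with
  | nil => rfl
  | left _ ih => rw [ih hl₂]
  | right => cases hl₂

theorem sublist_right {l₁ l₂ l : List α} (h : Interleave l₁ l₂ l) : l₂.Sublist l := by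
  induction h with
  | nil => exact .slnil
  | left _ ih => exact ih.cons _
  | right _ ih => exact ih.cons_cons _

theorem append_left {l₁ l₂ l : List α} (h : Interleave l₁ l₂ l) :
    ∀ u : List α, Interleave (u ++ l₁) l₂ (u ++ l)
  | [] => h
  | _ :: u => left (append_left h u)

theorem append_nil {l₁ l₂ : List α} : Interleave l₁ l₂ (l₁ ++ l₂) := by
  simpa using (nil_right (l := l₂)).symm.append_left l₁

theorem filter (p : α → Bool) {l₁ l₂ l : List α} (h : Interleave l₁ l₂ l) :
    Interleave (l₁.filter p) (l₂.filter p) (l.filter p) := by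
  induction h with
  | nil => exact nil
  | @left a _ _ _ _ ih => cases hp : p a <;> simp [hp, ih, left ih]
  | @right a _ _ _ _ ih => cases hp : p a <;> simp [hp, ih, right ih]

theorem exists_of_filter (p : α → Bool) {s₁ s₂ s : List α} (h : Interleave s₁ s₂ s)
    {l₁ l₂ : List α} (h₁ : l₁.filter p = s₁) (h₂ : l₂.filter p = s₂) :
    ∃ l, Interleave l₁ l₂ l ∧ l.filter p = s := by
  induction h generalizing l₁ l₂ with
  | nil => exact ⟨l₁ ++ l₂, append_nil, by simp [h₁, h₂]⟩
  | @left a _ _ _ _ ih =>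
    obtain ⟨u, v, rfl, hu, hpa, hv⟩ := List.filter_eq_cons_iff.mp h₁
    obtain ⟨l, hl, hfl⟩ := ih hv h₂
    exact ⟨u ++ a :: l, hl.left.append_left u,
      by simp [hpa, hfl, List.filter_eq_nil_iff.mpr hu]⟩
  | @right a _ _ _ _ ih =>
    obtain ⟨u, v, rfl, hu, hpa, hv⟩ := List.filter_eq_cons_iff.mp h₂
    obtain ⟨l, hl, hfl⟩ := ih h₁ hv
    exact ⟨u ++ a :: l, (hl.right.symm.append_left u).symm,
      by simp [hpa, hfl, List.filter_eq_nil_iff.mpr hu]⟩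

theorem eq_of_map_of_disjoint {f₁ : β₁ → α} {f₂ : β₂ → α} (hf₁ : Injective f₁)
    (hdisj : ∀ b₁ b₂, f₁ b₁ ≠ f₂ b₂) {l₁ t : List β₁} {l₂ : List β₂}
    (h : Interleave (l₁.map f₁) (l₂.map f₂) (t.map f₁)) : l₁ = t ∧ l₂ = [] := by
  obtain rfl : l₂ = [] := List.eq_nil_iff_forall_not_mem.mpr fun b hb => by
    obtain ⟨b₁, -, hb₁⟩ := List.mem_map.mp (h.sublist_right.mem (List.mem_map_of_mem hb))
    exact hdisj b₁ b hb₁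
  exact ⟨List.map_injective_iff.mpr hf₁ h.eq_of_nil_right, rfl⟩

end Interleave

end ListInterleave

section Relabel

variable {P Q A : Type}

theorem Msg.map_injective {f : P → Q} (hf : Injective f) : Injective (Msg.map (A := A) f) := by
  rintro ⟨s, r, x⟩ ⟨s', r', x'⟩ h
  simp only [Msg.map, Msg.mk.injEq] at h
  obtain ⟨hs, hr, rfl⟩ := h
  rw [hf hs, hf hr]

theorem Act.map_injective {f : P → Q} (hf : Injective f) : Injective (Act.map (A := A) f) := by
  rintro (m | m) (m' | m') h <;>
    simp only [Act.map, Act.send.injEq, Act.recv.injEq, reduceCtorEq] at h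
  all_goals rw [Msg.map_injective hf h]

theorem Act.isSend_map (f : P → Q) (a : Act P A) : (a.map f).isSend = a.isSend := by
  cases a <;> rfl

theorem projOut_map (f : P → Q) (w : List (Act P A)) :
    projOut (w.map (Act.map f)) = (projOut w).map (Act.map f) := by
  simp [projOut, List.filter_map, Function.comp_def, Act.isSend_map]

theorem Act.map_inl_ne_map_inr {P₁ P₂ : Type} (a₁ : Act P₁ A) (a₂ : Act P₂ A) :
    a₁.map Sum.inl ≠ a₂.map Sum.inr := by
  cases a₁ <;> cases a₂ <;> simp [Act.map, Msg.map]

end Relabel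

section Interleavings

variable {P₁ P₂ A : Type}

def Interleavings (T₁ : Set (List (Act P₁ A))) (T₂ : Set (List (Act P₂ A))) :
    Set (List (Act (P₁ ⊕ P₂) A)) :=
  {w | ∃ t₁ ∈ T₁, ∃ t₂ ∈ T₂, Interleave (t₁.map (Act.map .inl)) (t₂.map (Act.map .inr)) w}

theorem map_inl_mem_interleavings_iff {T₁ : Set (List (Act P₁ A))} {T₂ : Set (List (Act P₂ A))}
    (h₂ : [] ∈ T₂) {t : List (Act P₁ A)} : t.map (Act.map .inl) ∈ Interleavings T₁ T₂ ↔ t ∈ T₁ := by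
  refine ⟨fun ⟨t₁, ht₁, t₂, _, h⟩ => ?_, fun ht => ⟨t, ht, [], h₂, Interleave.nil_right⟩⟩
  obtain ⟨rfl, -⟩ := h.eq_of_map_of_disjoint (Act.map_injective Sum.inl_injective)
    Act.map_inl_ne_map_inr
  exact ht₁

theorem map_inr_mem_interleavings_iff {T₁ : Set (List (Act P₁ A))} {T₂ : Set (List (Act P₂ A))}
    (h₁ : [] ∈ T₁) {t : List (Act P₂ A)} : t.map (Act.map .inr) ∈ Interleavings T₁ T₂ ↔ t ∈ T₂ := by
  refine ⟨fun ⟨_, _, t₂, ht₂, h⟩ => ?_, fun ht => ⟨[], h₁, t, ht, Interleave.nil_right.symm⟩⟩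
  obtain ⟨rfl, -⟩ := h.symm.eq_of_map_of_disjoint (Act.map_injective Sum.inr_injective)
    fun a₂ a₁ => (Act.map_inl_ne_map_inr a₁ a₂).symm
  exact ht₂

theorem interleavings_inj {S₁ T₁ : Set (List (Act P₁ A))} {S₂ T₂ : Set (List (Act P₂ A))}
    (hS₁ : [] ∈ S₁) (hS₂ : [] ∈ S₂) (hT₁ : [] ∈ T₁) (hT₂ : [] ∈ T₂) :
    Interleavings S₁ S₂ = Interleavings T₁ T₂ ↔ S₁ = T₁ ∧ S₂ = T₂ := by
  refine ⟨fun h => ⟨?_, ?_⟩, fun ⟨h₁, h₂⟩ => h₁ ▸ h₂ ▸ rfl⟩ <;> ext t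
  · rw [← map_inl_mem_interleavings_iff hS₂, h, map_inl_mem_interleavings_iff hT₂]
  · rw [← map_inr_mem_interleavings_iff hS₁, h, map_inr_mem_interleavings_iff hT₁]

theorem image_projOut_interleavings (E₁ : Set (List (Act P₁ A))) (E₂ : Set (List (Act P₂ A))) :
    projOut '' Interleavings E₁ E₂ = Interleavings (projOut '' E₁) (projOut '' E₂) := by
  ext w
  constructor
  · rintro ⟨e, ⟨e₁, he₁, e₂, he₂, h⟩, rfl⟩
    refine ⟨projOut e₁, ⟨e₁, he₁, rfl⟩, projOut e₂, ⟨e₂, he₂, rfl⟩, ?_⟩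
    rw [← projOut_map, ← projOut_map]
    exact h.filter Act.isSend
  · rintro ⟨_, ⟨e₁, he₁, rfl⟩, _, ⟨e₂, he₂, rfl⟩, h⟩
    obtain ⟨e, he, rfl⟩ := h.exists_of_filter Act.isSend (projOut_map _ e₁) (projOut_map _ e₂)
    exact ⟨e, ⟨e₁, he₁, e₂, he₂, he⟩, rfl⟩

end Interleavings

section Steps

variable {P P₁ P₂ A : Type} {C C₁ C₂ D : Type*}

theorem steps_iff_of_step_iff {step : C → Act P A → C → Prop} {step' : D → Act P A → D → Prop}
    (g : D → C) (h : ∀ d a c', step (g d) a c' ↔ ∃ d', step' d a d' ∧ c' = g d')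
    {d : D} {w : List (Act P A)} {c' : C} :
    Steps step (g d) w c' ↔ ∃ d', Steps step' d w d' ∧ c' = g d' := by
  induction w generalizing d with
  | nil =>
    constructor
    · rintro ⟨⟩; exact ⟨d, .nil d, rfl⟩
    · rintro ⟨d', ⟨⟩, rfl⟩; exact .nil _
  | cons a w ih =>
    constructor
    · rintro (_ | ⟨hs, hw⟩)
      obtain ⟨d₁, hs', rfl⟩ := (h _ _ _).mp hs
      obtain ⟨d', hw', rfl⟩ := ih.mp hw
      exact ⟨d', .cons hs' hw', rfl⟩
    · rintro ⟨d', (_ | ⟨hs', hw'⟩), rfl⟩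
      exact .cons ((h _ _ _).mpr ⟨_, hs', rfl⟩) (ih.mpr ⟨d', hw', rfl⟩)

inductive InterleaveStep (step₁ : C₁ → Act P₁ A → C₁ → Prop) (step₂ : C₂ → Act P₂ A → C₂ → Prop) :
    C₁ × C₂ → Act (P₁ ⊕ P₂) A → C₁ × C₂ → Prop
  | left {c₁ d₁ : C₁} {c₂ : C₂} {a : Act P₁ A} :
      step₁ c₁ a d₁ → InterleaveStep step₁ step₂ (c₁, c₂) (a.map .inl) (d₁, c₂)
  | right {c₁ : C₁} {c₂ d₂ : C₂} {a : Act P₂ A} :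
      step₂ c₂ a d₂ → InterleaveStep step₁ step₂ (c₁, c₂) (a.map .inr) (c₁, d₂)

variable {step₁ : C₁ → Act P₁ A → C₁ → Prop} {step₂ : C₂ → Act P₂ A → C₂ → Prop}

theorem steps_interleaveStep_iff {c d : C₁ × C₂} {w : List (Act (P₁ ⊕ P₂) A)} :
    Steps (InterleaveStep step₁ step₂) c w d ↔
      ∃ w₁ w₂, Interleave (w₁.map (Act.map .inl)) (w₂.map (Act.map .inr)) w ∧
        Steps step₁ c.1 w₁ d.1 ∧ Steps step₂ c.2 w₂ d.2 := by
  constructor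
  · intro h
    induction h with
    | nil c => exact ⟨[], [], .nil, .nil _, .nil _⟩
    | cons hs _ ih =>
      obtain ⟨w₁, w₂, hw, h₁, h₂⟩ := ih
      cases hs with
      | left hs => exact ⟨_ :: w₁, w₂, hw.left, .cons hs h₁, h₂⟩
      | right hs => exact ⟨w₁, _ :: w₂, hw.right, h₁, .cons hs h₂⟩
  · rintro ⟨w₁, w₂, hw, h₁, h₂⟩
    obtain ⟨c₁, c₂⟩ := c
    obtain ⟨d₁, d₂⟩ := d
    generalize hl₁ : w₁.map (Act.map Sum.inl) = l₁ at hw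
    generalize hl₂ : w₂.map (Act.map Sum.inr) = l₂ at hw
    induction hw generalizing w₁ w₂ c₁ c₂ with
    | nil =>
      obtain rfl := List.map_eq_nil_iff.mp hl₁
      obtain rfl := List.map_eq_nil_iff.mp hl₂
      cases h₁; cases h₂; exact .nil _
    | left _ ih =>
      obtain ⟨a, w₁, rfl, rfl, rfl⟩ := List.map_eq_cons_iff.mp hl₁
      obtain _ | ⟨hs, h₁⟩ := h₁
      exact .cons (.left hs) (ih _ _ _ _ h₁ h₂ rfl hl₂)
    | right _ ih =>
      obtain ⟨a, w₂, rfl, rfl, rfl⟩ := List.map_eq_cons_iff.mp hl₂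
      obtain _ | ⟨hs, h₂⟩ := h₂
      exact .cons (.right hs) (ih _ _ _ _ h₁ h₂ hl₁ rfl)

theorem setOf_steps_eq_interleavings {C : Type*} {step : C → Act (P₁ ⊕ P₂) A → C → Prop}
    (g : C₁ × C₂ → C)
    (hstep : ∀ d a c', step (g d) a c' ↔ ∃ d', InterleaveStep step₁ step₂ d a d' ∧ c' = g d')
    {F : C → Prop} {F₁ : C₁ → Prop} {F₂ : C₂ → Prop} (hF : ∀ d, F (g d) ↔ F₁ d.1 ∧ F₂ d.2)
    (c₁ : C₁) (c₂ : C₂) :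
    {w | ∃ c, Steps step (g (c₁, c₂)) w c ∧ F c} =
      Interleavings {w | ∃ d₁, Steps step₁ c₁ w d₁ ∧ F₁ d₁}
        {w | ∃ d₂, Steps step₂ c₂ w d₂ ∧ F₂ d₂} := by
  ext w
  simp only [Set.mem_ofPred_eq, steps_iff_of_step_iff g hstep]
  constructor
  · rintro ⟨_, ⟨⟨d₁, d₂⟩, hw, rfl⟩, hfin⟩
    obtain ⟨w₁, w₂, hI, h₁, h₂⟩ := steps_interleaveStep_iff.mp hw
    obtain ⟨hf₁, hf₂⟩ := (hF _).mp hfin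
    exact ⟨w₁, ⟨d₁, h₁, hf₁⟩, w₂, ⟨d₂, h₂, hf₂⟩, hI⟩
  · rintro ⟨w₁, ⟨d₁, h₁, hf₁⟩, w₂, ⟨d₂, h₂, hf₂⟩, hI⟩
    exact ⟨_, ⟨(d₁, d₂), steps_interleaveStep_iff.mpr ⟨w₁, w₂, hI, h₁, h₂⟩, rfl⟩,
      (hF _).mpr ⟨hf₁, hf₂⟩⟩

end Steps

section SumSemantics

variable {P₁ P₂ A : Type} {N₁ : Network P₁ A} {N₂ : Network P₂ A}

def Network.sumStates (s₁ : ∀ p, N₁.State p) (s₂ : ∀ p, N₂.State p) :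
    ∀ p, (N₁.sum N₂).State p :=
  Sum.rec (motive := (N₁.sum N₂).State) s₁ s₂

theorem Network.sum_trans_inl {p : P₁} {s s' : N₁.State p} {a : Act P₁ A}
    (h : N₁.trans p s a s') : (N₁.sum N₂).trans (.inl p) s (a.map .inl) s' :=
  ⟨a, rfl, h⟩

theorem Network.sum_trans_inr {p : P₂} {s s' : N₂.State p} {a : Act P₂ A}
    (h : N₂.trans p s a s') : (N₁.sum N₂).trans (.inr p) s (a.map .inr) s' :=
  ⟨a, rfl, h⟩

theorem Network.sum_trans_inl_send {p : P₁} {s s' : N₁.State p} {m : Msg (P₁ ⊕ P₂) A}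
    (h : (N₁.sum N₂).trans (.inl p) s (.send m) s') :
    ∃ m₁, m = m₁.map .inl ∧ N₁.trans p s (.send m₁) s' := by
  obtain ⟨m₁ | m₁, h, ht⟩ := h
  · exact ⟨m₁, Act.send.inj h, ht⟩
  · cases h

theorem Network.sum_trans_inr_send {p : P₂} {s s' : N₂.State p} {m : Msg (P₁ ⊕ P₂) A}
    (h : (N₁.sum N₂).trans (.inr p) s (.send m) s') :
    ∃ m₂, m = m₂.map .inr ∧ N₂.trans p s (.send m₂) s' := by
  obtain ⟨m₂ | m₂, h, ht⟩ := h
  · exact ⟨m₂, Act.send.inj h, ht⟩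
  · cases h

theorem Network.sum_trans_inl_recv {p : P₁} {s s' : N₁.State p} {m : Msg (P₁ ⊕ P₂) A}
    (h : (N₁.sum N₂).trans (.inl p) s (.recv m) s') :
    ∃ m₁, m = m₁.map .inl ∧ N₁.trans p s (.recv m₁) s' := by
  obtain ⟨m₁ | m₁, h, ht⟩ := h
  · cases h
  · exact ⟨m₁, Act.recv.inj h, ht⟩

theorem Network.sum_trans_inr_recv {p : P₂} {s s' : N₂.State p} {m : Msg (P₁ ⊕ P₂) A}
    (h : (N₁.sum N₂).trans (.inr p) s (.recv m) s') :
    ∃ m₂, m = m₂.map .inr ∧ N₂.trans p s (.recv m₂) s' := by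
  obtain ⟨m₂ | m₂, h, ht⟩ := h
  · cases h
  · exact ⟨m₂, Act.recv.inj h, ht⟩

theorem Network.sum_init : (N₁.sum N₂).init = Network.sumStates N₁.init N₂.init := by
  funext p
  cases p <;> rfl

def MbConfig.sum (c₁ : MbConfig N₁) (c₂ : MbConfig N₂) : MbConfig (N₁.sum N₂) :=
  ⟨Network.sumStates c₁.st c₂.st,
    Sum.elim (List.map (Msg.map .inl) ∘ c₁.buf) (List.map (Msg.map .inr) ∘ c₂.buf)⟩

theorem mbInit_sum : MbInit (N₁.sum N₂) = (MbInit N₁).sum (MbInit N₂) := by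
  rw [MbInit, MbInit, MbInit, MbConfig.sum, Network.sum_init]
  congr
  funext p
  cases p <;> rfl

variable [DecidableEq P₁] [DecidableEq P₂]

theorem Network.update_sumStates_inl (s₁ : ∀ p, N₁.State p) (s₂ : ∀ p, N₂.State p) (p : P₁)
    (x : N₁.State p) :
    update (Network.sumStates s₁ s₂) (.inl p) x = Network.sumStates (update s₁ p x) s₂ :=
  (Sum.rec_update_left (γ := (N₁.sum N₂).State) s₁ s₂ p x).symm

theorem Network.update_sumStates_inr (s₁ : ∀ p, N₁.State p) (s₂ : ∀ p, N₂.State p) (p : P₂)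
    (x : N₂.State p) :
    update (Network.sumStates s₁ s₂) (.inr p) x = Network.sumStates s₁ (update s₂ p x) :=
  (Sum.rec_update_right (γ := (N₁.sum N₂).State) s₁ s₂ p x).symm

theorem syncStep_sum_iff {s₁ : ∀ p, N₁.State p} {s₂ : ∀ p, N₂.State p} {a}
    {s' : ∀ p, (N₁.sum N₂).State p} :
    SyncStep (N₁.sum N₂) (Network.sumStates s₁ s₂) a s' ↔
      ∃ d, InterleaveStep (SyncStep N₁) (SyncStep N₂) (s₁, s₂) a d ∧
        s' = Network.sumStates d.1 d.2 := by
  constructor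
  · rintro ⟨⟨ms | ms, mr, x⟩, s1, s2, ht1, ht2⟩
    · obtain ⟨⟨ms, r, x⟩, ⟨⟩, ht1⟩ := Network.sum_trans_inl_send ht1
      obtain ⟨⟨_, _, _⟩, ⟨⟩, ht2⟩ := Network.sum_trans_inl_recv ht2
      refine ⟨_, .left (SyncStep.comm s₁ ⟨ms, r, x⟩ s1 s2 ht1 ht2), ?_⟩
      dsimp only
      rw [Network.update_sumStates_inl s₁ s₂ ms s1, Network.update_sumStates_inl _ s₂ r s2]
    · obtain ⟨⟨ms, r, x⟩, ⟨⟩, ht1⟩ := Network.sum_trans_inr_send ht1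
      obtain ⟨⟨_, _, _⟩, ⟨⟩, ht2⟩ := Network.sum_trans_inr_recv ht2
      refine ⟨_, .right (SyncStep.comm s₂ ⟨ms, r, x⟩ s1 s2 ht1 ht2), ?_⟩
      dsimp only
      rw [Network.update_sumStates_inr s₁ s₂ ms s1, Network.update_sumStates_inr s₁ _ r s2]
  · rintro ⟨_, ⟨⟨m, s1, s2, ht1, ht2⟩⟩ | ⟨⟨m, s1, s2, ht1, ht2⟩⟩, rfl⟩
    · dsimp only
      rw [← Network.update_sumStates_inl, ← Network.update_sumStates_inl]
      exact .comm (Network.sumStates s₁ s₂) (m.map Sum.inl) s1 s2 (Network.sum_trans_inl ht1)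
        (Network.sum_trans_inl ht2)
    · dsimp only
      rw [← Network.update_sumStates_inr, ← Network.update_sumStates_inr]
      exact .comm (Network.sumStates s₁ s₂) (m.map Sum.inr) s1 s2 (Network.sum_trans_inr ht1)
        (Network.sum_trans_inr ht2)

theorem MbConfig.sum_update_inl (c₁ : MbConfig N₁) (c₂ : MbConfig N₂) (p : P₁) (s : N₁.State p)
    (r : P₁) (l : List (Msg P₁ A)) :
    MbConfig.sum ⟨update c₁.st p s, update c₁.buf r l⟩ c₂ =
      ⟨update (c₁.sum c₂).st (.inl p) s,
        update (c₁.sum c₂).buf (.inl r) (l.map (Msg.map .inl))⟩ := by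
  rw [MbConfig.sum, MbConfig.sum, Network.update_sumStates_inl, Sum.update_elim_inl,
    Function.comp_update]

theorem MbConfig.sum_update_inr (c₁ : MbConfig N₁) (c₂ : MbConfig N₂) (p : P₂) (s : N₂.State p)
    (r : P₂) (l : List (Msg P₂ A)) :
    c₁.sum ⟨update c₂.st p s, update c₂.buf r l⟩ =
      ⟨update (c₁.sum c₂).st (.inr p) s,
        update (c₁.sum c₂).buf (.inr r) (l.map (Msg.map .inr))⟩ := by
  rw [MbConfig.sum, MbConfig.sum, Network.update_sumStates_inr, Sum.update_elim_inr,
    Function.comp_update]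

theorem mbStep_sum_iff {c₁ : MbConfig N₁} {c₂ : MbConfig N₂} {a} {c' : MbConfig (N₁.sum N₂)} :
    MbStep (N₁.sum N₂) (c₁.sum c₂) a c' ↔
      ∃ d, InterleaveStep (MbStep N₁) (MbStep N₂) (c₁, c₂) a d ∧ c' = d.1.sum d.2 := by
  constructor
  · rintro (⟨⟨ms | ms, mr, x⟩, s', ht⟩ | ⟨⟨_, mr | mr, x⟩, s', rest, ht, hbuf⟩)
    · obtain ⟨⟨ms, r, x⟩, ⟨⟩, ht⟩ := Network.sum_trans_inl_send ht
      refine ⟨_, .left (MbStep.send c₁ ⟨ms, r, x⟩ s' ht), ?_⟩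
      dsimp only
      rw [MbConfig.sum_update_inl c₁ c₂ ms s', List.map_append]
      rfl
    · obtain ⟨⟨ms, r, x⟩, ⟨⟩, ht⟩ := Network.sum_trans_inr_send ht
      refine ⟨_, .right (MbStep.send c₂ ⟨ms, r, x⟩ s' ht), ?_⟩
      dsimp only
      rw [MbConfig.sum_update_inr c₁ c₂ ms s', List.map_append]
      rfl
    · obtain ⟨m, ⟨⟩, ht⟩ := Network.sum_trans_inl_recv ht
      obtain ⟨b, rest₁, hb, hm, rfl⟩ := List.map_eq_cons_iff.mp hbuf
      obtain rfl := Msg.map_injective Sum.inl_injective hm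
      refine ⟨_, .left (MbStep.recv c₁ b s' rest₁ ht hb), ?_⟩
      exact (MbConfig.sum_update_inl c₁ c₂ _ s' _ rest₁).symm
    · obtain ⟨m, ⟨⟩, ht⟩ := Network.sum_trans_inr_recv ht
      obtain ⟨b, rest₁, hb, hm, rfl⟩ := List.map_eq_cons_iff.mp hbuf
      obtain rfl := Msg.map_injective Sum.inr_injective hm
      refine ⟨_, .right (MbStep.recv c₂ b s' rest₁ ht hb), ?_⟩
      exact (MbConfig.sum_update_inr c₁ c₂ _ s' _ rest₁).symm
  · rintro ⟨_, ⟨⟨m, s', ht⟩ | ⟨m, s', rest, ht, hbuf⟩⟩ | ⟨⟨m, s', ht⟩ | ⟨m, s', rest, ht, hbuf⟩⟩,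
      rfl⟩
    · dsimp only
      rw [MbConfig.sum_update_inl, List.map_append]
      exact .send (c₁.sum c₂) (m.map Sum.inl) s' (Network.sum_trans_inl ht)
    · dsimp only
      rw [MbConfig.sum_update_inl]
      exact .recv (c₁.sum c₂) (m.map Sum.inl) s' _ (Network.sum_trans_inl ht)
        (congrArg (List.map _) hbuf)
    · dsimp only
      rw [MbConfig.sum_update_inr, List.map_append]
      exact .send (c₁.sum c₂) (m.map Sum.inr) s' (Network.sum_trans_inr ht)
    · dsimp only
      rw [MbConfig.sum_update_inr]
      exact .recv (c₁.sum c₂) (m.map Sum.inr) s' _ (Network.sum_trans_inr ht)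
        (congrArg (List.map _) hbuf)

theorem mbExecs_sum : MbExecs (N₁.sum N₂) = Interleavings (MbExecs N₁) (MbExecs N₂) := by
  rw [MbExecs, mbInit_sum]
  exact setOf_steps_eq_interleavings (fun d : MbConfig N₁ × MbConfig N₂ => d.1.sum d.2)
    (fun _ _ _ => mbStep_sum_iff) (F₁ := MbFinal N₁) (F₂ := MbFinal N₂) (fun _ => Sum.forall) _ _

theorem syncExecs_sum : SyncExecs (N₁.sum N₂) = Interleavings (SyncExecs N₁) (SyncExecs N₂) := by
  rw [SyncExecs, Network.sum_init]
  exact setOf_steps_eq_interleavings (fun d => Network.sumStates d.1 d.2)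
    (fun _ _ _ => syncStep_sum_iff) (F₁ := fun s => ∀ p, s p ∈ N₁.final p)
    (F₂ := fun s => ∀ p, s p ∈ N₂.final p) (fun _ => Sum.forall) _ _

theorem mbTraces_sum : MbTraces (N₁.sum N₂) = Interleavings (MbTraces N₁) (MbTraces N₂) := by
  rw [MbTraces, mbExecs_sum, image_projOut_interleavings]
  rfl

theorem syncTraces_sum :
    SyncTraces (N₁.sum N₂) = Interleavings (SyncTraces N₁) (SyncTraces N₂) := by
  rw [SyncTraces, syncExecs_sum, image_projOut_interleavings]
  rfl

end SumSemantics

section EmptyTrace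

variable {P A : Type} [DecidableEq P] {N : Network P A}

theorem nil_mem_mbTraces (h : ∀ p, N.init p ∈ N.final p) : [] ∈ MbTraces N :=
  ⟨[], ⟨MbInit N, .nil _, h⟩, rfl⟩

theorem nil_mem_syncTraces (h : ∀ p, N.init p ∈ N.final p) : [] ∈ SyncTraces N :=
  ⟨[], ⟨N.init, .nil _, h⟩, rfl⟩

end EmptyTrace

theorem forest_synchronisability_general {P₁ P₂ A : Type} [DecidableEq P₁] [DecidableEq P₂]
    (N₁ : Network P₁ A) (N₂ : Network P₂ A)
    (hfin₁ : ∀ p, N₁.final p = Set.univ) (hfin₂ : ∀ p, N₂.final p = Set.univ) :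
    MbTraces (N₁.sum N₂) = SyncTraces (N₁.sum N₂) ↔
      (MbTraces N₁ = SyncTraces N₁ ∧ MbTraces N₂ = SyncTraces N₂) := by
  have hinit₁ : ∀ p, N₁.init p ∈ N₁.final p := by simp [hfin₁]
  have hinit₂ : ∀ p, N₂.init p ∈ N₂.final p := by simp [hfin₂]
  rw [mbTraces_sum, syncTraces_sum]
  exact interleavings_inj (nil_mem_mbTraces hinit₁) (nil_mem_mbTraces hinit₂)
    (nil_mem_syncTraces hinit₁) (nil_mem_syncTraces hinit₂)

/-- a forest (disjoint union) of tree networks is synchronisable iff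
each component is. -/
theorem forest_synchronisability {P₁ P₂ A : Type} [DecidableEq P₁] [DecidableEq P₂]
    (N₁ : Network P₁ A) (N₂ : Network P₂ A)
    (hfin₁ : ∀ p, N₁.final p = Set.univ) (hfin₂ : ∀ p, N₂.final p = Set.univ)
    (ht₁ : TreeTopo N₁) (ht₂ : TreeTopo N₂) :
    MbTraces (N₁.sum N₂) = SyncTraces (N₁.sum N₂) ↔
      (MbTraces N₁ = SyncTraces N₁ ∧ MbTraces N₂ = SyncTraces N₂) :=
  forest_synchronisability_general N₁ N₂ hfin₁ hfin₂
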